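/- arXiv:0910.5455 — 2 statements merged into one kernel-verified Lean document; each statement's English description precedes it below -/
import Mathlib

section
/- Let n ≥ 2 and a be coprime positive integers with a < n, and let Λ = ℤ² + ℤ·(1/n)(1,a) ⊆ ℝ². Let P₀ = (1,0), P_k = (0,1), and let P₁,…,P_{k−1} be the primitive vectors of Λ lying on the boundary of the convex hull of (Λ ∖ {0}) ∩ ℝ²_{≥0}, ordered so that consecutive pairs span lattice triangles O Pᵥ P_{ν+1} of area 1/2 with respect to Λ. Writing ℓᵥ for the sum of the coordinates of Pᵥ, the quantity Δ₀² := −2 − Σ_{0<ν<k} ((ℓ_{ν−1}/ℓᵥ − 1) + (ℓ_{ν+1}/ℓᵥ − 1)) satisfies −n ≤ Δ₀² < 0. -/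
/-!
With `ω(p, q) = n · det(p, q)`, the form `ω` is integral on `Λ` and `ω(Pᵥ, Pᵥ₊₁) = 1`, so Cramer's
rule gives `Pᵥ₋₁ + Pᵥ₊₁ = cᵥ Pᵥ` with `cᵥ = ω(Pᵥ₋₁, Pᵥ₊₁) ∈ ℤ`. Applying the linear form `ℓ`, the
`ν`-th summand of the sum equals `cᵥ - 2`. Positivity of `ℓ` gives `cᵥ > 0`, and `cᵥ = 1` is
impossible: then `Pᵥ = Pᵥ₋₁ + Pᵥ₊₁` is the centre of the parallelogram with vertices `Pᵥ ± Pᵥ₋₁`,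
`Pᵥ ± Pᵥ₊₁`, all nonzero lattice points of the quadrant, so `Pᵥ` is interior to the convex hull.
Hence `cᵥ ≥ 2` and `Δ₀² ≤ -2`.

For the lower bound, the second coordinates `yᵥ` of `Pᵥ` satisfy the same recurrence, with
`y₀ = 0`, `y₁ = 1/n`, `y_k = 1`. Since `cᵥ ≥ 2`, the increments grow:
`yᵥ - yᵥ₋₁ ≥ y₁ (1 + Σ_{0<μ<ν} (c_μ - 2))`, and comparing with `y_k = 1` gives
`2 + Σ (cᵥ - 2) ≤ n`.
-/

open Finset

def wedge (p q : ℝ × ℝ) : ℝ := p.1 * q.2 - p.2 * q.1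

lemma wedge_smul_eq (u v w : ℝ × ℝ) : wedge u v • w = wedge w v • u + wedge u w • v := by
  ext <;> simp only [wedge, Prod.smul_fst, Prod.smul_snd, Prod.fst_add, Prod.snd_add,
    smul_eq_mul] <;> ring

lemma ne_zero_of_wedge_mul_eq_one {p q : ℝ × ℝ} {r : ℝ} (h : wedge p q * r = 1) :
    p ≠ 0 ∧ q ≠ 0 := by
  constructor <;> rintro rfl <;> simp [wedge] at h

lemma add_eq_smul_of_wedge_mul_eq_one {A B C : ℝ × ℝ} {r : ℝ} (hAB : wedge A B * r = 1)
    (hBC : wedge B C * r = 1) : A + C = (wedge A C * r) • B := by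
  have hBA : wedge B A * r = -1 := by rw [← hAB]; simp only [wedge]; ring
  have h := congrArg (r • ·) (wedge_smul_eq B C A)
  simp only [smul_add, smul_smul, mul_comm r, hBC, hBA, one_smul, neg_smul] at h
  linear_combination (norm := module) h

lemma wedge_pred_mul_eq_one {n k : ℕ} {P : ℕ → ℝ × ℝ}
    (harea : ∀ ν < k, wedge (P ν) (P (ν + 1)) * n = 1) {ν : ℕ} (hν : ν ∈ Ioo 0 k) :
    wedge (P (ν - 1)) (P ν) * n = 1 := by
  obtain ⟨h0, hk⟩ := mem_Ioo.mp hν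
  simpa [Nat.sub_add_cancel h0] using harea (ν - 1) (by omega)

lemma fst_add_snd_pos {p : ℝ × ℝ} (hp : 0 ≤ p) (h : p ≠ 0) : 0 < p.1 + p.2 := by
  obtain ⟨h1, h2⟩ : 0 ≤ p.1 ∧ 0 ≤ p.2 := hp
  by_contra! hle
  exact h (Prod.ext (by simp only [Prod.fst_zero]; linarith)
    (by simp only [Prod.snd_zero]; linarith))

lemma fst_add_snd_add_eq_mul {A B C : ℝ × ℝ} {c : ℝ} (h : A + C = c • B) :
    A.1 + A.2 + (C.1 + C.2) = c * (B.1 + B.2) := by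
  have h1 := congrArg Prod.fst h
  have h2 := congrArg Prod.snd h
  simp only [Prod.fst_add, Prod.snd_add, Prod.smul_fst, Prod.smul_snd, smul_eq_mul] at h1 h2
  linarith

lemma exists_int_coords_of_mem_closure {n a : ℕ} (hn : n ≠ 0) {p : ℝ × ℝ}
    (hp : p ∈ AddSubgroup.closure {((1:ℝ), (0:ℝ)), ((0:ℝ), (1:ℝ)), ((1:ℝ)/n, (a:ℝ)/n)}) :
    ∃ i j : ℤ, (n : ℝ) * p.1 = i ∧ p.2 - a * p.1 = j := by
  induction hp using AddSubgroup.closure_induction with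
  | mem x hx =>
    rcases hx with rfl | rfl | rfl
    · exact ⟨n, -a, by push_cast; ring, by push_cast; ring⟩
    · exact ⟨0, 1, by push_cast; ring, by push_cast; ring⟩
    · exact ⟨1, 0, by field_simp; push_cast; ring, by field_simp; push_cast; ring⟩
  | zero => exact ⟨0, 0, by simp, by simp⟩
  | add x y _ _ hx hy =>
    obtain ⟨i, j, hi, hj⟩ := hx
    obtain ⟨i', j', hi', hj'⟩ := hy
    refine ⟨i + i', j + j', ?_, ?_⟩ <;> simp only [Prod.fst_add, Prod.snd_add, Int.cast_add]
    · linear_combination hi + hi'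
    · linear_combination hj + hj'
  | neg x _ hx =>
    obtain ⟨i, j, hi, hj⟩ := hx
    refine ⟨-i, -j, ?_, ?_⟩ <;> simp only [Prod.fst_neg, Prod.snd_neg, Int.cast_neg]
    · linear_combination -hi
    · linear_combination -hj

lemma exists_int_eq_wedge_mul_of_mem_closure {n a : ℕ} (hn : n ≠ 0) {p q : ℝ × ℝ}
    (hp : p ∈ AddSubgroup.closure {((1:ℝ), (0:ℝ)), ((0:ℝ), (1:ℝ)), ((1:ℝ)/n, (a:ℝ)/n)})
    (hq : q ∈ AddSubgroup.closure {((1:ℝ), (0:ℝ)), ((0:ℝ), (1:ℝ)), ((1:ℝ)/n, (a:ℝ)/n)}) :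
    ∃ m : ℤ, wedge p q * n = m := by
  obtain ⟨i, j, hi, hj⟩ := exists_int_coords_of_mem_closure hn hp
  obtain ⟨i', j', hi', hj'⟩ := exists_int_coords_of_mem_closure hn hq
  -- in the coordinates `(n x, y - a x)` the lattice lies in `ℤ²`, and `n · det` becomes the
  -- determinant of `ℤ²`
  refine ⟨i * j' - j * i', ?_⟩
  push_cast
  rw [← hi, ← hj, ← hi', ← hj']
  simp only [wedge]; ring

lemma Convex.mem_interior_of_add_mem_of_sub_mem {K : Set (ℝ × ℝ)} (hK : Convex ℝ K)
    {x u v : ℝ × ℝ} (huv : wedge u v ≠ 0) (hxu : x + u ∈ K) (hxu' : x - u ∈ K)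
    (hxv : x + v ∈ K) (hxv' : x - v ∈ K) : x ∈ interior K := by
  have segment_mem : ∀ w, x + w ∈ K → x - w ∈ K → ∀ r : ℝ, |r| ≤ 1 → x + r • w ∈ K := by
    intro w hadd hsub r hr
    obtain ⟨hr₁, hr₂⟩ := abs_le.mp hr
    convert hK hadd hsub (a := (1 + r) / 2) (b := (1 - r) / 2) (by linarith) (by linarith)
      (by ring) using 1
    ext <;> simp <;> ring
  have square_mem : ∀ s t : ℝ, |s| < 1 / 2 → |t| < 1 / 2 → x + s • u + t • v ∈ K := by
    intro s t hs ht
    have hu := segment_mem u hxu hxu' (2 * s) (by rw [abs_mul]; norm_num; linarith)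
    have hv := segment_mem v hxv hxv' (2 * t) (by rw [abs_mul]; norm_num; linarith)
    convert hK hu hv (a := 1 / 2) (b := 1 / 2) (by norm_num) (by norm_num) (by norm_num)
      using 1
    ext <;> simp <;> ring
  -- Cramer's rule: `s z`, `t z` are the coordinates of `z - x` in the basis `u, v`
  let s : ℝ × ℝ → ℝ := fun z => wedge (z - x) v / wedge u v
  let t : ℝ × ℝ → ℝ := fun z => wedge u (z - x) / wedge u v
  have hs : Continuous s := by simp only [s, wedge]; fun_prop
  have ht : Continuous t := by simp only [t, wedge]; fun_prop
  refine interior_maximal (t := {z | |s z| < 1 / 2} ∩ {z | |t z| < 1 / 2}) ?_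
    ((isOpen_lt hs.abs continuous_const).inter (isOpen_lt ht.abs continuous_const)) ?_
  · rintro z ⟨hsz, htz⟩
    convert square_mem _ _ hsz htz using 1
    calc z = x + (wedge u v)⁻¹ • (wedge u v • (z - x)) := by rw [inv_smul_smul₀ huv]; abel
      _ = x + s z • u + t z • v := by
        rw [wedge_smul_eq, smul_add, smul_smul, smul_smul, add_assoc]
        simp only [s, t, div_eq_inv_mul]
  · simp [s, t, wedge]

lemma two_le_wedge_mul_of_mem_frontier {Λ : AddSubgroup (ℝ × ℝ)} {n : ℕ}
    (hΛ : ∀ p ∈ Λ, ∀ q ∈ Λ, ∃ m : ℤ, wedge p q * n = m) {A B C : ℝ × ℝ}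
    (hA : A ∈ Λ) (hB : B ∈ Λ) (hC : C ∈ Λ) (hA₀ : 0 ≤ A) (hB₀ : 0 ≤ B) (hC₀ : 0 ≤ C)
    (hAB : wedge A B * n = 1) (hBC : wedge B C * n = 1)
    (hfr : B ∈ frontier (convexHull ℝ
      (((Λ : Set (ℝ × ℝ)) \ {0}) ∩ {p : ℝ × ℝ | 0 ≤ p.1 ∧ 0 ≤ p.2}))) :
    2 ≤ wedge A C * n := by
  obtain ⟨m, hm⟩ := hΛ A hA C hC
  have hsum : A + C = (m : ℝ) • B := hm ▸ add_eq_smul_of_wedge_mul_eq_one hAB hBC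
  obtain ⟨hA0, hB0⟩ := ne_zero_of_wedge_mul_eq_one hAB
  have hC0 := (ne_zero_of_wedge_mul_eq_one hBC).2
  have hm_pos : 0 < m := by
    have hℓ := fst_add_snd_add_eq_mul hsum
    have := fst_add_snd_pos hA₀ hA0
    have := fst_add_snd_pos hB₀ hB0
    have : 0 ≤ C.1 + C.2 := add_nonneg hC₀.1 hC₀.2
    have : (0 : ℝ) < m := by nlinarith
    exact_mod_cast this
  have hm_ne : m ≠ 1 := by
    rintro rfl
    have hBAC : B = A + C := by simpa using hsum.symm
    have mem_hull : ∀ p ∈ Λ, 0 ≤ p → p ≠ 0 → p ∈ convexHull ℝ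
        (((Λ : Set (ℝ × ℝ)) \ {0}) ∩ {p : ℝ × ℝ | 0 ≤ p.1 ∧ 0 ≤ p.2}) :=
      fun p hp hp₀ hp0 => subset_convexHull ℝ _ ⟨⟨hp, hp0⟩, hp₀⟩
    refine hfr.2 ((convex_convexHull ℝ _).mem_interior_of_add_mem_of_sub_mem
      (u := A) (v := C) ?_ ?_ ?_ ?_ ?_)
    · intro h
      rw [h, zero_mul] at hm
      norm_num at hm
    · exact mem_hull _ (Λ.add_mem hB hA) (add_nonneg hB₀ hA₀)
        fun h => hB0 ((add_eq_zero_iff_of_nonneg hB₀ hA₀).mp h).1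
    · rw [hBAC, add_sub_cancel_left]; exact mem_hull C hC hC₀ hC0
    · exact mem_hull _ (Λ.add_mem hB hC) (add_nonneg hB₀ hC₀)
        fun h => hB0 ((add_eq_zero_iff_of_nonneg hB₀ hC₀).mp h).1
    · rw [hBAC, add_sub_cancel_right]; exact mem_hull A hA hA₀ hA0
  have : (2 : ℤ) ≤ m := by omega
  rw [hm]; exact_mod_cast this

lemma sum_div_sub_one_add_div_sub_one_eq {ℓ c : ℕ → ℝ} (s : Finset ℕ)
    (hrec : ∀ ν ∈ s, ℓ (ν - 1) + ℓ (ν + 1) = c ν * ℓ ν) (hℓ : ∀ ν ∈ s, ℓ ν ≠ 0) :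
    ∑ ν ∈ s, (ℓ (ν - 1) / ℓ ν - 1 + (ℓ (ν + 1) / ℓ ν - 1)) = ∑ ν ∈ s, (c ν - 2) := by
  refine sum_congr rfl fun ν hν => ?_
  field_simp [hℓ ν hν]
  linear_combination hrec ν hν

lemma mul_one_add_sum_sub_two_le_sub_of_add_eq_mul {y c : ℕ → ℝ} {k : ℕ} (h0 : y 0 = 0)
    (h1 : 0 ≤ y 1)
    (hrec : ∀ ν ∈ Ioo 0 k, y (ν - 1) + y (ν + 1) = c ν * y ν)
    (hc : ∀ ν ∈ Ioo 0 k, 2 ≤ c ν) :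
    ∀ μ, 1 ≤ μ → μ ≤ k →
      y 1 * (1 + ∑ ν ∈ Ioo 0 μ, (c ν - 2)) ≤ y μ - y (μ - 1) ∧ y 1 ≤ y μ := by
  intro μ hμ1 hμk
  induction μ, hμ1 using Nat.le_induction with
  | base => simp [h0, show Ioo 0 1 = ∅ from rfl]
  | succ μ hμ1 ih =>
    obtain ⟨ih_diff, ih_le⟩ := ih (by omega)
    have hμ : μ ∈ Ioo 0 k := mem_Ioo.mpr ⟨by omega, by omega⟩
    have hsum : ∑ ν ∈ Ioo 0 (μ + 1), (c ν - 2) = (c μ - 2) + ∑ ν ∈ Ioo 0 μ, (c ν - 2) := by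
      rw [Ioo_add_one_right_eq_Ioc, ← Ioo_insert_right (by omega), sum_insert (by simp)]
    have hnonneg : 0 ≤ ∑ ν ∈ Ioo 0 μ, (c ν - 2) :=
      sum_nonneg fun ν hν => by linarith [hc ν (Ioo_subset_Ioo_right (by omega) hν)]
    have hrecμ := hrec μ hμ
    have hcμ := hc μ hμ
    simp only [Nat.add_sub_cancel, hsum]
    constructor
    · nlinarith
    · nlinarith

lemma sum_sub_two_le_of_add_eq_mul {y c : ℕ → ℝ} {k : ℕ} {r : ℝ} (hk : 1 ≤ k) (hr : 2 ≤ r)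
    (h0 : y 0 = 0) (h1 : y 1 * r = 1) (hyk : y k = 1)
    (hrec : ∀ ν ∈ Ioo 0 k, y (ν - 1) + y (ν + 1) = c ν * y ν)
    (hc : ∀ ν ∈ Ioo 0 k, 2 ≤ c ν) :
    ∑ ν ∈ Ioo 0 k, (c ν - 2) ≤ r - 2 := by
  have hy1 : 0 < y 1 := pos_of_mul_pos_left (h1 ▸ one_pos) (by linarith)
  rcases hk.eq_or_lt with rfl | hk2
  · rw [hyk] at h1
    linarith
  have hincr := mul_one_add_sum_sub_two_le_sub_of_add_eq_mul h0 hy1.le hrec hc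
  have hk' := (hincr k (by omega) le_rfl).1
  have hk1 := (hincr (k - 1) (by omega) (by omega)).2
  nlinarith

theorem stmt4_general (n a : ℕ) (hn : 2 ≤ n)
    (Λ : AddSubgroup (ℝ × ℝ))
    (hΛ : Λ = AddSubgroup.closure {((1:ℝ), (0:ℝ)), ((0:ℝ), (1:ℝ)), ((1:ℝ)/n, (a:ℝ)/n)})
    (k : ℕ) (hk : 1 ≤ k) (P : ℕ → ℝ × ℝ)
    (hP0 : P 0 = (1, 0)) (hPk : P k = (0, 1))
    (hmem : ∀ ν ≤ k, P ν ∈ Λ)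
    (hquad : ∀ ν ≤ k, 0 ≤ (P ν).1 ∧ 0 ≤ (P ν).2)
    (hbd : ∀ ν, 0 < ν → ν < k →
      P ν ∈ frontier (convexHull ℝ
        (((Λ : Set (ℝ × ℝ)) \ {0}) ∩ {p : ℝ × ℝ | 0 ≤ p.1 ∧ 0 ≤ p.2})))
    (ℓ : ℕ → ℝ) (hℓ : ∀ ν ≤ k, ℓ ν = (P ν).1 + (P ν).2)
    (harea : ∀ ν < k, ((P ν).1 * (P (ν+1)).2 - (P ν).2 * (P (ν+1)).1) * n = 1) :
    -(n : ℝ) ≤ -2 - ∑ ν ∈ Finset.Ioo 0 k,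
        ((ℓ (ν-1)) / (ℓ ν) - 1 + ((ℓ (ν+1)) / (ℓ ν) - 1))
    ∧ -2 - ∑ ν ∈ Finset.Ioo 0 k,
        ((ℓ (ν-1)) / (ℓ ν) - 1 + ((ℓ (ν+1)) / (ℓ ν) - 1)) < 0 := by
  set c : ℕ → ℝ := fun ν => wedge (P (ν - 1)) (P (ν + 1)) * n
  have hrec : ∀ ν ∈ Ioo 0 k, P (ν - 1) + P (ν + 1) = c ν • P ν := fun ν hν =>
    add_eq_smul_of_wedge_mul_eq_one (wedge_pred_mul_eq_one harea hν) (harea ν (mem_Ioo.mp hν).2)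
  have hc : ∀ ν ∈ Ioo 0 k, 2 ≤ c ν := fun ν hν => by
    obtain ⟨h0, hk⟩ := mem_Ioo.mp hν
    exact two_le_wedge_mul_of_mem_frontier
      (fun p hp q hq => exists_int_eq_wedge_mul_of_mem_closure (by omega) (hΛ ▸ hp) (hΛ ▸ hq))
      (hmem _ (by omega)) (hmem ν hk.le) (hmem _ hk) (hquad _ (by omega)) (hquad ν hk.le)
      (hquad _ hk) (wedge_pred_mul_eq_one harea hν) (harea ν hk) (hbd ν h0 hk)
  have hsum := sum_div_sub_one_add_div_sub_one_eq (Ioo 0 k) (c := c) (ℓ := ℓ)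
    (fun ν hν => by
      obtain ⟨h0, hk⟩ := mem_Ioo.mp hν
      rw [hℓ _ (by omega), hℓ _ hk, hℓ ν hk.le]
      exact fst_add_snd_add_eq_mul (hrec ν hν))
    (fun ν hν => by
      obtain ⟨-, hk⟩ := mem_Ioo.mp hν
      rw [hℓ ν hk.le]
      exact (fst_add_snd_pos (hquad ν hk.le) (ne_zero_of_wedge_mul_eq_one (harea ν hk)).1).ne')
  -- the second coordinates satisfy the recurrence of the `Pᵥ`, with `y₀ = 0`, `y₁ = 1/n`, `y_k = 1`
  have hbound := sum_sub_two_le_of_add_eq_mul (y := fun ν => (P ν).2) (r := n) hk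
    (by exact_mod_cast hn) (by simp [hP0]) (by simpa [hP0, wedge] using harea 0 hk) (by simp [hPk])
    (fun ν hν => by simpa using congrArg Prod.snd (hrec ν hν)) hc
  have hnonneg : 0 ≤ ∑ ν ∈ Ioo 0 k, (c ν - 2) := sum_nonneg fun ν hν => by linarith [hc ν hν]
  rw [hsum]
  constructor <;> linarith

/-- Toric content of Lemma 3.1: for the chain of primitive boundary vectors of
the lattice `Λ = ℤ² + ℤ·(1/n)(1,a)` in the first quadrant, with `P₀ = (1,0)`,
`P_k = (0,1)`, consecutive triangles of Λ-area 1/2, and `ℓᵥ` the coordinate sum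
of `Pᵥ`, the quantity `Δ₀² = -2 - Σ_{0<ν<k}((ℓ_{ν-1}/ℓᵥ - 1) + (ℓ_{ν+1}/ℓᵥ - 1))`
satisfies `-n ≤ Δ₀² < 0`. -/
theorem stmt4 (n a : ℕ) (hn : 2 ≤ n) (ha : 0 < a) (han : a < n)
    (hcop : Nat.Coprime n a)
    (Λ : AddSubgroup (ℝ × ℝ))
    (hΛ : Λ = AddSubgroup.closure {((1:ℝ), (0:ℝ)), ((0:ℝ), (1:ℝ)), ((1:ℝ)/n, (a:ℝ)/n)})
    (k : ℕ) (hk : 1 ≤ k) (P : ℕ → ℝ × ℝ)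
    (hP0 : P 0 = (1, 0)) (hPk : P k = (0, 1))
    (hmem : ∀ ν ≤ k, P ν ∈ Λ)
    (hquad : ∀ ν ≤ k, 0 ≤ (P ν).1 ∧ 0 ≤ (P ν).2)
    (hbd : ∀ ν, 0 < ν → ν < k →
      P ν ∈ frontier (convexHull ℝ
        (((Λ : Set (ℝ × ℝ)) \ {0}) ∩ {p : ℝ × ℝ | 0 ≤ p.1 ∧ 0 ≤ p.2})))
    (ℓ : ℕ → ℝ) (hℓ : ∀ ν ≤ k, ℓ ν = (P ν).1 + (P ν).2)
    (harea : ∀ ν < k, ((P ν).1 * (P (ν+1)).2 - (P ν).2 * (P (ν+1)).1) * n = 1) :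
    -(n : ℝ) ≤ -2 - ∑ ν ∈ Finset.Ioo 0 k,
        ((ℓ (ν-1)) / (ℓ ν) - 1 + ((ℓ (ν+1)) / (ℓ ν) - 1))
    ∧ -2 - ∑ ν ∈ Finset.Ioo 0 k,
        ((ℓ (ν-1)) / (ℓ ν) - 1 + ((ℓ (ν+1)) / (ℓ ν) - 1)) < 0 :=
  stmt4_general n a hn Λ hΛ k hk P hP0 hPk hmem hquad hbd ℓ hℓ harea
end

section
/- Let m ≥ 1, and suppose real numbers e_X, c₂X̃, d̂, δ̂, π̂, q and weights w₀,…,w₄ (with |w| = Σwᵢ, w₄ = max wᵢ) satisfy: (i) c₂X̂ = m·e_X − Σᵢ(wᵢ−1)·eᵢ − Σ_{x∈Q}(h_x−1) where each eᵢ satisfies 2−2π̂ > eᵢ ≥ 2−2π̂−4d̂; (ii) c₂X̃ ≤ e_X + Σ_{x∈Q}(r_x−1); (iii) Q has at most 10d̂ elements, each r_x ≤ w₄ and h_x ≤ m; (iv) 2π̂ − 2 = d̂ + δ̂. Then c₂X̂ ≥ m·c₂X̃ − (10·m·w₄ − (|w|−5))·d̂ + (|w|−5)·δ̂. -/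
/- Each point of `Q` contributes at most `m (w₄ - 1) + (m - 1) < m w₄` to `m Σ(r_x - 1) + Σ(h_x - 1)`,
and there are at most `10 d̂` of them; each `e_i` with `w_i > 1` is below `2 - 2π̂ = -(d̂ + δ̂)`. -/

open Finset

lemma sum_mul_le_sum_mul_of_le {ι : Type*} (s : Finset ι) (a e : ι → ℝ) (b : ℝ)
    (ha : ∀ i ∈ s, 0 ≤ a i) (he : ∀ i ∈ s, e i ≤ b) :
    ∑ i ∈ s, a i * e i ≤ (∑ i ∈ s, a i) * b := by
  rw [sum_mul]
  exact sum_le_sum fun i hi => mul_le_mul_of_nonneg_left (he i hi) (ha i hi)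

lemma mul_sum_sub_one_add_sum_sub_one_le {α : Type*} (Q : Finset α) (r h : α → ℝ) (m W : ℝ)
    (hm : 0 ≤ m) (hr : ∀ x ∈ Q, r x ≤ W) (hh : ∀ x ∈ Q, h x ≤ m) :
    m * ∑ x ∈ Q, (r x - 1) + ∑ x ∈ Q, (h x - 1) ≤ Q.card * (m * W - 1) := by
  rw [mul_sum, ← sum_add_distrib, ← nsmul_eq_mul]
  refine sum_le_card_nsmul _ _ _ fun x hx => ?_
  nlinarith [hr x hx, hh x hx]

theorem stmt10_general {α : Type*} (m : ℝ) (hm : 1 ≤ m) (w : Fin 5 → ℕ)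
    (hw : ∀ i, 1 ≤ w i)
    (Q : Finset α) (r h : α → ℝ) (e : Fin 5 → ℝ)
    (eX c2til c2hat dhat δhat πhat : ℝ)
    (h1 : c2hat = m * eX - (∑ i, ((w i : ℝ) - 1) * e i) - ∑ x ∈ Q, (h x - 1))
    (h2 : ∀ i, e i < 2 - 2 * πhat ∧ 2 - 2 * πhat - 4 * dhat ≤ e i)
    (h3 : c2til ≤ eX + ∑ x ∈ Q, (r x - 1))
    (h4 : (Q.card : ℝ) ≤ 10 * dhat)
    (h5 : ∀ x ∈ Q, r x ≤ (w 4 : ℝ) ∧ h x ≤ m)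
    (h6 : 2 * πhat - 2 = dhat + δhat) :
    c2hat ≥ m * c2til - (10 * m * (w 4 : ℝ) - ((∑ i, (w i : ℝ)) - 5)) * dhat
      + ((∑ i, (w i : ℝ)) - 5) * δhat := by
  have hweights : ∑ i, ((w i : ℝ) - 1) * e i ≤ ((∑ i, (w i : ℝ)) - 5) * (2 - 2 * πhat) := by
    have hsum : ∑ i, ((w i : ℝ) - 1) = (∑ i, (w i : ℝ)) - 5 := by simp [sum_sub_distrib]
    rw [← hsum]
    refine sum_mul_le_sum_mul_of_le _ _ _ _ (fun i _ => ?_) (fun i _ => (h2 i).1.le)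
    exact sub_nonneg.2 (by exact_mod_cast hw i)
  have hsingular : m * ∑ x ∈ Q, (r x - 1) + ∑ x ∈ Q, (h x - 1) ≤ 10 * m * (w 4 : ℝ) * dhat := by
    have hmw : 0 ≤ m * (w 4 : ℝ) := by positivity
    calc _ ≤ Q.card * (m * (w 4 : ℝ) - 1) :=
          mul_sum_sub_one_add_sum_sub_one_le Q r h m _ (by linarith)
            (fun x hx => (h5 x hx).1) (fun x hx => (h5 x hx).2)
      _ ≤ 10 * dhat * (m * (w 4 : ℝ)) := by nlinarith
      _ = 10 * m * (w 4 : ℝ) * dhat := by ring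
  have hc2til : m * c2til ≤ m * eX + m * ∑ x ∈ Q, (r x - 1) := by
    rw [← mul_add]
    exact mul_le_mul_of_nonneg_left h3 (by linarith)
  linear_combination -h1 + hweights + hsingular + hc2til - ((∑ i, (w i : ℝ)) - 5) * h6

/-- Arithmetic content of Proposition 4.2: under the stated numerical hypotheses
one gets `c₂(X̂) ≥ m c₂(X̃) - (10 m w₄ - (|w|-5)) d̂ + (|w|-5) δ̂`. -/
theorem stmt10 {α : Type*} (m : ℝ) (hm : 1 ≤ m) (w : Fin 5 → ℕ)
    (hw : ∀ i, 1 ≤ w i) (hw4 : ∀ i, w i ≤ w 4)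
    (Q : Finset α) (r h : α → ℝ) (e : Fin 5 → ℝ)
    (eX c2til c2hat dhat δhat πhat : ℝ)
    (h1 : c2hat = m * eX - (∑ i, ((w i : ℝ) - 1) * e i) - ∑ x ∈ Q, (h x - 1))
    (h2 : ∀ i, e i < 2 - 2 * πhat ∧ 2 - 2 * πhat - 4 * dhat ≤ e i)
    (h3 : c2til ≤ eX + ∑ x ∈ Q, (r x - 1))
    (h4 : (Q.card : ℝ) ≤ 10 * dhat)
    (h5 : ∀ x ∈ Q, r x ≤ (w 4 : ℝ) ∧ h x ≤ m)
    (h6 : 2 * πhat - 2 = dhat + δhat) :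
    c2hat ≥ m * c2til - (10 * m * (w 4 : ℝ) - ((∑ i, (w i : ℝ)) - 5)) * dhat
      + ((∑ i, (w i : ℝ)) - 5) * δhat :=
  stmt10_general m hm w hw Q r h e eX c2til c2hat dhat δhat πhat h1 h2 h3 h4 h5 h6
end
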